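/- arXiv:1602.04157 — 2 statements merged into one kernel-verified Lean document; each statement's English description precedes it below -/
import Mathlib

section
/- The function X ↦ tr(X^{-1}) on symmetric positive definite n×n matrices is geodesically convex with respect to the Killing metric: for all positive definite X, Y and s ∈ [0,1], tr(γ(s)^{-1}) ≤ (1-s) tr(X^{-1}) + s tr(Y^{-1}), where γ(s) = X^{1/2}(X^{-1/2}YX^{-1/2})^s X^{1/2}. -/
open Matrix

/-- Real power of a symmetric (Hermitian) real matrix, defined through the
spectral decomposition; on non-Hermitian input we return the matrix itself. -/
noncomputable def mpow {n : ℕ} (A : Matrix (Fin n) (Fin n) ℝ) (s : ℝ) :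
    Matrix (Fin n) (Fin n) ℝ :=
  if hA : A.IsHermitian then
    (hA.eigenvectorUnitary : Matrix (Fin n) (Fin n) ℝ) *
      Matrix.diagonal (fun i => (hA.eigenvalues i) ^ s) *
      (star (hA.eigenvectorUnitary : Matrix (Fin n) (Fin n) ℝ))
  else A

/-- Matrix logarithm of a symmetric real matrix via spectral decomposition. -/
noncomputable def mlog {n : ℕ} (A : Matrix (Fin n) (Fin n) ℝ) :
    Matrix (Fin n) (Fin n) ℝ :=
  if hA : A.IsHermitian then
    (hA.eigenvectorUnitary : Matrix (Fin n) (Fin n) ℝ) *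
      Matrix.diagonal (fun i => Real.log (hA.eigenvalues i)) *
      (star (hA.eigenvectorUnitary : Matrix (Fin n) (Fin n) ℝ))
  else A

/-- The geodesic `s ↦ X^{1/2} (X^{-1/2} Y X^{-1/2})^s X^{1/2}` in the manifold of
positive definite matrices with the trace-type Killing metric. -/
noncomputable def geodesicPD {n : ℕ} (X Y : Matrix (Fin n) (Fin n) ℝ) (s : ℝ) :
    Matrix (Fin n) (Fin n) ℝ :=
  mpow X (1 / 2) * mpow (mpow X (-(1 / 2)) * Y * mpow X (-(1 / 2))) s * mpow X (1 / 2)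


/-!
With `Q = X^{-1/2}` and `M = Q Y Q` one has `γ(s)⁻¹ = Q M^{-s} Q`, `X⁻¹ = Q Q` and
`Y⁻¹ = Q M⁻¹ Q`. The weighted AM–GM inequality `t^{-s} ≤ (1 - s) + s t⁻¹` for `t > 0`, pushed
through the continuous functional calculus, gives `M^{-s} ≤ (1 - s) I + s M⁻¹` in the Loewner
order; conjugation by the self-adjoint `Q` and the trace both preserve this order.
-/

namespace CFC

variable {A : Type*} [PartialOrder A] [Ring A] [StarRing A] [TopologicalSpace A]
  [StarOrderedRing A] [Algebra ℝ A] [ContinuousFunctionalCalculus ℝ A IsSelfAdjoint]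
  [NonnegSpectrumClass ℝ A]

theorem _root_.IsStrictlyPositive.rpow_mul_mul_rpow {a b : A} (ha : IsStrictlyPositive a)
    (hb : IsStrictlyPositive b) (r : ℝ) : IsStrictlyPositive (a ^ r * b * a ^ r) := by
  have har : IsStrictlyPositive (a ^ r) := ha.rpow _ _
  simpa only [har.isSelfAdjoint.star_eq] using
    har.isUnit.isStrictlyPositive_star_left_conjugate_iff.2 hb

variable [IsSemitopologicalRing A] [T2Space A]

theorem rpow_le_one_sub_smul_one_add_smul {a : A} (ha : 0 ≤ a) {t : ℝ} (ht₀ : 0 ≤ t)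
    (ht₁ : t ≤ 1) : a ^ t ≤ (1 - t) • (1 : A) + t • a := by
  have hspec : ∀ x ∈ spectrum ℝ a, 0 ≤ x := fun x hx => spectrum_nonneg_of_nonneg ha hx
  calc a ^ t = cfc (fun x : ℝ => x ^ t) a := rpow_eq_cfc_real ha
    _ ≤ cfc (fun x : ℝ => (1 - t) + t * x) a := by
      refine cfc_mono fun x hx => ?_
      simpa using Real.geom_mean_le_arith_mean2_weighted (sub_nonneg.2 ht₁) ht₀ zero_le_one
        (hspec x hx) (by ring)
    _ = (1 - t) • (1 : A) + t • a := by
      rw [cfc_add .., cfc_const .., cfc_const_mul_id .., Algebra.algebraMap_eq_smul_one]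

theorem rpow_neg_le_one_sub_smul_one_add_smul_inverse {a : A} (ha : IsStrictlyPositive a)
    {t : ℝ} (ht₀ : 0 ≤ t) (ht₁ : t ≤ 1) :
    a ^ (-t) ≤ (1 - t) • (1 : A) + t • Ring.inverse a := by
  rw [inverse_eq_rpow_neg_one, ← neg_one_mul, ← rpow_rpow a (-1) t (by norm_num)]
  exact rpow_le_one_sub_smul_one_add_smul rpow_nonneg ht₀ ht₁

end CFC

open scoped MatrixOrder

namespace Matrix

variable {ι : Type*} [Fintype ι]

theorem trace_mono {A B : Matrix ι ι ℝ} (h : A ≤ B) : A.trace ≤ B.trace :=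
  (tracePositiveLinearMap ι ℝ ℝ).monotone' h

theorem rpow_neg [DecidableEq ι] {𝕜 : Type*} [RCLike 𝕜] {A : Matrix ι ι 𝕜}
    (hA : IsStrictlyPositive A) (s : ℝ) : A ^ (-s) = (A ^ s)⁻¹ :=
  (inv_eq_right_inv (CFC.rpow_mul_rpow_neg s)).symm

theorem mul_inv_conj_mul_eq_inv [DecidableEq ι] {R : Type*} [CommRing R] {Q Y : Matrix ι ι R}
    (hQ : IsUnit Q) : Q * (Q * Y * Q)⁻¹ * Q = Y⁻¹ := by
  have hdet : IsUnit Q.det := (isUnit_iff_isUnit_det Q).1 hQ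
  rw [mul_inv_rev, mul_inv_rev]
  calc Q * (Q⁻¹ * (Y⁻¹ * Q⁻¹)) * Q = (Q * Q⁻¹) * Y⁻¹ * (Q⁻¹ * Q) := by simp only [mul_assoc]
    _ = Y⁻¹ := by rw [mul_nonsing_inv Q hdet, nonsing_inv_mul Q hdet, one_mul, mul_one]

end Matrix

section Geodesic

variable {n : ℕ}

theorem mpow_eq_rpow {A : Matrix (Fin n) (Fin n) ℝ} (hA : A.PosSemidef) (s : ℝ) :
    mpow A s = A ^ s := by
  rw [CFC.rpow_eq_cfc_real (nonneg_iff_posSemidef.2 hA), hA.1.cfc_eq, IsHermitian.cfc, mpow,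
    dif_pos hA.1]
  simp [Function.comp_def]

theorem geodesicPD_eq {X Y : Matrix (Fin n) (Fin n) ℝ} (hX : X.PosSemidef) (hY : Y.PosSemidef)
    (s : ℝ) : geodesicPD X Y s =
      X ^ (1 / 2 : ℝ) * (X ^ (-(1 / 2) : ℝ) * Y * X ^ (-(1 / 2) : ℝ)) ^ s * X ^ (1 / 2 : ℝ) := by
  have hQ : (X ^ (-(1 / 2) : ℝ)).PosSemidef := nonneg_iff_posSemidef.1 CFC.rpow_nonneg
  have hM : (X ^ (-(1 / 2) : ℝ) * Y * X ^ (-(1 / 2) : ℝ)).PosSemidef := by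
    simpa only [hQ.1.eq] using hY.conjTranspose_mul_mul_same (X ^ (-(1 / 2) : ℝ))
  rw [geodesicPD, mpow_eq_rpow hX, mpow_eq_rpow hX, mpow_eq_rpow hM]

theorem inv_geodesicPD {X Y : Matrix (Fin n) (Fin n) ℝ} (hX : X.PosDef) (hY : Y.PosDef) (s : ℝ) :
    (geodesicPD X Y s)⁻¹ = X ^ (-(1 / 2) : ℝ) *
      (X ^ (-(1 / 2) : ℝ) * Y * X ^ (-(1 / 2) : ℝ)) ^ (-s) * X ^ (-(1 / 2) : ℝ) := by
  have hX' : IsStrictlyPositive X := isStrictlyPositive_iff_posDef.2 hX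
  have hM := hX'.rpow_mul_mul_rpow (isStrictlyPositive_iff_posDef.2 hY) (-(1 / 2))
  have hP_inv : (X ^ (1 / 2 : ℝ))⁻¹ = X ^ (-(1 / 2) : ℝ) := (Matrix.rpow_neg hX' _).symm
  rw [geodesicPD_eq hX.posSemidef hY.posSemidef, Matrix.mul_inv_rev, Matrix.mul_inv_rev, hP_inv,
    ← Matrix.rpow_neg hM, ← mul_assoc]

end Geodesic

/-- Geodesic convexity of `X ↦ tr(X⁻¹)` with respect to the Killing metric on
positive definite matrices. -/
theorem trace_inv_geodesic_convex (n : ℕ) (X Y : Matrix (Fin n) (Fin n) ℝ)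
    (hX : X.PosDef) (hY : Y.PosDef) :
    ∀ s ∈ Set.Icc (0 : ℝ) 1,
      ((geodesicPD X Y s)⁻¹).trace ≤ (1 - s) * (X⁻¹).trace + s * (Y⁻¹).trace := by
  rintro s ⟨hs₀, hs₁⟩
  rw [inv_geodesicPD hX hY]
  rw [← isStrictlyPositive_iff_posDef] at hX hY
  set Q := X ^ (-(1 / 2) : ℝ)
  set M := Q * Y * Q
  have hQ : IsStrictlyPositive Q := hX.rpow _ _
  have hM : IsStrictlyPositive M := hX.rpow_mul_mul_rpow hY _
  have hQQ : Q * Q = X⁻¹ := by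
    rw [← CFC.rpow_add hX.isUnit, nonsing_inv_eq_ringInverse, CFC.inverse_eq_rpow_neg_one hX]
    norm_num
  have hle : M ^ (-s) ≤ (1 - s) • 1 + s • M⁻¹ := by
    simpa only [← nonsing_inv_eq_ringInverse] using
      CFC.rpow_neg_le_one_sub_smul_one_add_smul_inverse hM hs₀ hs₁
  calc (Q * M ^ (-s) * Q).trace ≤ (Q * ((1 - s) • 1 + s • M⁻¹) * Q).trace :=
        trace_mono (hQ.isSelfAdjoint.conjugate_le_conjugate hle)
    _ = (1 - s) * (Q * Q).trace + s * (Q * M⁻¹ * Q).trace := by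
        simp only [mul_add, add_mul, mul_smul_comm, smul_mul_assoc, mul_one, trace_add,
          trace_smul, smul_eq_mul]
    _ = (1 - s) * (X⁻¹).trace + s * (Y⁻¹).trace := by
        rw [hQQ, mul_inv_conj_mul_eq_inv hQ.isUnit]
end

section
/- Let K₁, K₂ and f₁, f₂ be as follows: K₁ is the set of (x₁,x₂) in the closed first quadrant with x₁²+x₂² ≤ 4 ≤ (x₁-1)²+x₂², K₂ = [-1,1], f₁((x₁,x₂),y) = y(x₁³ + y(1-x₂)³), f₂((x₁,x₂),y) = -y²x₂ + 4|y|(x₁+1). Then the set of Nash equilibrium points of (f₁,f₂; K₁,K₂) equals K₁ × {0}; in particular, for every (x₁,x₂) ∈ K₁, the pair ((x₁,x₂), 0) satisfies f₁((q₁,q₂),0) ≥ f₁((x₁,x₂),0) for all (q₁,q₂) ∈ K₁ and f₂((x₁,x₂),y) ≥ f₂((x₁,x₂),0) for all y ∈ [-1,1]. -/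
/-- In the game on `K₁ × [-1,1]` with
`f₁((x₁,x₂),y) = y(x₁³ + y(1-x₂)³)` and `f₂((x₁,x₂),y) = -y²x₂ + 4|y|(x₁+1)`,
the set of Nash equilibrium points is exactly `K₁ × {0}`. -/
theorem nash_equilibria_eq_K1_times_zero :
    let K₁ : Set (ℝ × ℝ) := {p | 0 ≤ p.1 ∧ 0 ≤ p.2 ∧ p.1 ^ 2 + p.2 ^ 2 ≤ 4 ∧
        4 ≤ (p.1 - 1) ^ 2 + p.2 ^ 2}
    let K₂ : Set ℝ := Set.Icc (-1 : ℝ) 1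
    let f₁ : (ℝ × ℝ) → ℝ → ℝ := fun x y => y * (x.1 ^ 3 + y * (1 - x.2) ^ 3)
    let f₂ : (ℝ × ℝ) → ℝ → ℝ := fun x y => -y ^ 2 * x.2 + 4 * |y| * (x.1 + 1)
    {pq : (ℝ × ℝ) × ℝ | pq.1 ∈ K₁ ∧ pq.2 ∈ K₂ ∧
        (∀ q ∈ K₁, f₁ pq.1 pq.2 ≤ f₁ q pq.2) ∧
        (∀ y ∈ K₂, f₂ pq.1 pq.2 ≤ f₂ pq.1 y)}
      = {pq : (ℝ × ℝ) × ℝ | pq.1 ∈ K₁ ∧ pq.2 = 0} := by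
  intro K₁ K₂ f₁ f₂
  ext ⟨⟨x₁, x₂⟩, y⟩
  simp only [Set.mem_setOf_eq]
  constructor
  · rintro ⟨hK, hy, _, h2⟩
    refine ⟨hK, ?_⟩
    obtain ⟨hx1, hx2, hle, _⟩ := hK
    simp only at hx1 hx2 hle
    have h0 := h2 0 (by constructor <;> norm_num)
    simp only [f₂] at h0
    norm_num at h0
    have habs : |y| ≤ 1 := abs_le.mpr ⟨hy.1, hy.2⟩
    have hx2' : x₂ ≤ 2 := by nlinarith
    have hy2 : y ^ 2 = |y| ^ 2 := (sq_abs y).symm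
    have : |y| = 0 := by nlinarith [abs_nonneg y]
    exact abs_eq_zero.mp this
  · rintro ⟨hK, hy0⟩
    subst hy0
    refine ⟨hK, by constructor <;> norm_num, ?_, ?_⟩
    · intro q _; simp [f₁]
    · intro y hy
      obtain ⟨hx1, hx2, hle, _⟩ := hK
      simp only at hx1 hx2 hle
      have habs : |y| ≤ 1 := abs_le.mpr ⟨hy.1, hy.2⟩
      have hx2' : x₂ ≤ 2 := by nlinarith
      have hy2 : y ^ 2 = |y| ^ 2 := (sq_abs y).symm
      simp only [f₂]
      norm_num
      rw [hy2]
      nlinarith [abs_nonneg y]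
end
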